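/- arXiv:2605.31114 — 6 statements merged into one kernel-verified Lean document; each statement's English description precedes it below -/
import Mathlib

section
/- If k > 1 is an integer and 3*x^m = (2^k - 1)*(2^k + 1) for integers x and m ≥ 2, then there exist integers x1, x2 and s ∈ {0,1} such that 2^k - 1 = 3^s * x1^m and 2^k + 1 = 3^(1-s) * x2^m. -/
theorem factorization_into_powers (x : ℤ) (m k : ℕ) (hk : 1 < k) (hm : 2 ≤ m)
    (h : 3 * x ^ m = ((2 : ℤ) ^ k - 1) * ((2 : ℤ) ^ k + 1)) :
    ∃ (x1 x2 : ℤ) (s : ℕ), s ≤ 1 ∧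
      (2 : ℤ) ^ k - 1 = 3 ^ s * x1 ^ m ∧ (2 : ℤ) ^ k + 1 = 3 ^ (1 - s) * x2 ^ m := by
  -- natural number versions of the two factors
  set A : ℕ := 2 ^ k - 1 with hA
  set B : ℕ := 2 ^ k + 1 with hB
  have h2k : 1 ≤ 2 ^ k := Nat.one_le_two_pow
  have hAcast : ((A : ℤ)) = (2 : ℤ) ^ k - 1 := by
    rw [hA]; push_cast [h2k]; ring
  have hBcast : ((B : ℤ)) = (2 : ℤ) ^ k + 1 := by
    rw [hB]; push_cast; ring
  -- A is odd
  have hAodd : ¬ 2 ∣ A := by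
    intro h2
    have : (2 : ℤ) ∣ (A : ℤ) := by exact_mod_cast Int.natCast_dvd_natCast.mpr h2
    rw [hAcast] at this
    have : (2 : ℤ) ∣ 1 := (dvd_sub_right (dvd_pow_self 2 (by omega))).mp this
    norm_num at this
  -- A and B are coprime
  have hcop : Nat.Coprime A B := by
    have hdvd2 : Nat.gcd A B ∣ 2 := by
      have h1 : Nat.gcd A B ∣ A := Nat.gcd_dvd_left A B
      have h2 : Nat.gcd A B ∣ B := Nat.gcd_dvd_right A B
      have := Nat.dvd_sub h2 h1
      simpa [show B - A = 2 by omega] using this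
    rcases (Nat.dvd_prime Nat.prime_two).mp hdvd2 with hg | hg
    · exact hg
    · exact absurd (hg ▸ Nat.gcd_dvd_left A B) hAodd
  -- x^m is nonneg hence equals natAbs^m
  have hABpos : (0 : ℤ) < (A : ℤ) * B := by
    rw [hAcast, hBcast]
    have : (2:ℤ) ≤ 2 ^ k := by exact_mod_cast Nat.one_lt_two_pow_iff.mpr (by omega)
    nlinarith
  have hxm : x ^ m = ((x.natAbs : ℤ)) ^ m := by
    have hnn : 0 ≤ x ^ m := by nlinarith [hABpos, h, hAcast, hBcast]
    calc x ^ m = ((x ^ m).natAbs : ℤ) := (Int.natAbs_of_nonneg hnn).symm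
      _ = _ := by rw [Int.natAbs_pow]; push_cast; ring
  set n : ℕ := x.natAbs with hn
  have hNat : 3 * n ^ m = A * B := by
    have : (3 : ℤ) * (n : ℤ) ^ m = (A : ℤ) * B := by
      rw [← hxm, hAcast, hBcast]; exact h
    exact_mod_cast this
  -- 3 divides A or B
  have h3 : 3 ∣ A ∨ 3 ∣ B := by
    have : 3 ∣ A * B := ⟨n ^ m, hNat.symm⟩
    exact (Nat.Prime.dvd_mul (by norm_num)).mp this
  rcases h3 with h3A | h3B
  · -- A = 3 a', s = 1
    obtain ⟨a, ha⟩ := h3A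
    have hcop' : Nat.Coprime a B := Nat.Coprime.coprime_dvd_left ⟨3, by omega⟩ hcop
    have hmul : a * B = n ^ m := by
      have : 3 * n ^ m = 3 * (a * B) := by rw [hNat, ha]; ring
      omega
    obtain ⟨d, hd⟩ := exists_eq_pow_of_mul_eq_pow (by rw [Nat.isUnit_iff]; exact hcop' : IsUnit (gcd a B)) hmul
    obtain ⟨e, he⟩ := exists_eq_pow_of_mul_eq_pow (by rw [Nat.isUnit_iff]; exact hcop'.symm : IsUnit (gcd B a)) (mul_comm a B ▸ hmul)
    refine ⟨d, e, 1, le_refl 1, ?_, ?_⟩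
    · rw [← hAcast, ha, hd]; push_cast; ring
    · rw [← hBcast, he]; push_cast; ring
  · -- B = 3 b', s = 0
    obtain ⟨b, hb⟩ := h3B
    have hcop' : Nat.Coprime A b := Nat.Coprime.coprime_dvd_right ⟨3, by omega⟩ hcop
    have hmul : A * b = n ^ m := by
      have : 3 * n ^ m = 3 * (A * b) := by rw [hNat, hb]; ring
      omega
    obtain ⟨d, hd⟩ := exists_eq_pow_of_mul_eq_pow (by rw [Nat.isUnit_iff]; exact hcop' : IsUnit (gcd A b)) hmul
    obtain ⟨e, he⟩ := exists_eq_pow_of_mul_eq_pow (by rw [Nat.isUnit_iff]; exact hcop'.symm : IsUnit (gcd b A)) (mul_comm A b ▸ hmul)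
    refine ⟨d, e, 0, by norm_num, ?_, ?_⟩
    · rw [← hAcast, hd]; push_cast; ring
    · rw [← hBcast, hb, he]; push_cast; ring
end

section
/- The Thue equation 3*x^3 - y^3 = 1 has no integer solutions (x, y) with y = 2^t for some integer t ≥ 1. -/
theorem thue_r0 : ¬ ∃ (x y : ℤ) (t : ℕ), 1 ≤ t ∧ y = 2 ^ t ∧ 3 * x ^ 3 - y ^ 3 = 1 := by
  rintro ⟨x, y, t, ht, rfl, heq⟩
  have h7 : ((3 * x ^ 3 - (2 ^ t) ^ 3 : ℤ) : ZMod 7) = 1 := by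
    rw [heq]; norm_num
  push_cast at h7
  have h2 : ((2 : ZMod 7) ^ t) ^ 3 = 1 := by
    rw [← pow_mul, mul_comm, pow_mul]
    simp [show (2:ZMod 7)^3 = 1 from rfl]
  rw [h2] at h7
  have : ∀ a : ZMod 7, 3 * a ^ 3 - 1 ≠ 1 := by decide
  exact this _ h7
end

section
/- The Thue equation 3*x^3 - 4*y^3 = 1 has no integer solutions (x, y) with y = 2^t for some integer t ≥ 1. -/
theorem thue_r2 : ¬ ∃ (x y : ℤ) (t : ℕ), 1 ≤ t ∧ y = 2 ^ t ∧ 3 * x ^ 3 - 4 * y ^ 3 = 1 := by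
  rintro ⟨x, y, t, ht, rfl, h⟩
  have h7 : (3 * (x : ZMod 7) ^ 3 - 4 * ((2 : ZMod 7) ^ t) ^ 3 = 1) := by
    have := congrArg (fun z : ℤ => (z : ZMod 7)) h
    push_cast at this
    exact this
  have h8 : ((2 : ZMod 7) ^ t) ^ 3 = 1 := by
    rw [← pow_mul, mul_comm, pow_mul]
    rw [show ((2:ZMod 7)^3 : ZMod 7) = 1 from by decide, one_pow]
  rw [h8] at h7
  have : ∀ a : ZMod 7, 3 * a ^ 3 - 4 * 1 ≠ 1 := by decide
  exact this x h7
end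

section
/- There is no integer solution (x, n) with n ≥ 3 to the equation 3*x^3 = 2^n + 1. -/
theorem cube_case : ¬ ∃ (x : ℤ) (n : ℕ), 3 ≤ n ∧ 3 * x ^ 3 = 2 ^ n + 1 := by
  rintro ⟨x, n, hn, hx⟩
  -- x is positive
  have h2n : (0:ℤ) < 2 ^ n := by positivity
  have hxpos : 0 < x := by nlinarith [sq_nonneg x, sq_nonneg (x + 1)]
  -- n is odd (mod 3)
  obtain ⟨m, hm⟩ : ∃ m, n = 2 * m + 1 := by
    rcases Nat.even_or_odd n with ⟨j, hj⟩ | ⟨j, hj⟩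
    · exfalso
      have h3 := congrArg (fun z : ℤ => (z : ZMod 3)) hx
      push_cast at h3
      rw [hj, ← two_mul, pow_mul] at h3
      have : ((2:ZMod 3))^2 = 1 := by decide
      rw [this, one_pow] at h3
      have : (3 : ZMod 3) = 0 := by decide
      rw [this, zero_mul] at h3
      exact absurd h3.symm (by decide)
    · exact ⟨j, hj⟩
  -- x ≡ 3 (mod 8), using n ≥ 3
  have h8 := congrArg (fun z : ℤ => (z : ZMod 8)) hx
  push_cast at h8
  have hpow0 : (2 : ZMod 8) ^ n = 0 := by
    obtain ⟨j, hj⟩ : ∃ j, n = 3 + j := ⟨n - 3, by omega⟩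
    rw [hj, pow_add]
    have : (2 : ZMod 8) ^ 3 = 0 := by decide
    rw [this, zero_mul]
  rw [hpow0, zero_add] at h8
  have hx8 : (x : ZMod 8) = 3 := by
    have key : ∀ z : ZMod 8, 3 * z ^ 3 = 1 → z = 3 := by decide
    exact key _ h8
  -- write x = 8k + 3 with k ≥ 0
  have hmod : x ≡ 3 [ZMOD 8] := by
    have := (ZMod.intCast_eq_intCast_iff x 3 8).mp (by exact_mod_cast hx8)
    exact this
  obtain ⟨c, hc⟩ := Int.modEq_iff_dvd.mp hmod
  -- hc : 3 - x = 8 * c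
  set k : ℤ := -c with hk
  have hxk : x = 8 * k + 3 := by omega
  have hknn : 0 ≤ k := by omega
  set K : ℕ := k.toNat with hKdef
  have hK : (K : ℤ) = k := Int.toNat_of_nonneg hknn
  set D : ℕ := 24 * K + 7 with hDdef
  have hD : (D : ℤ) = 3 * x - 2 := by push_cast [hK]; omega
  -- D divides 9 * 2^n + 1 = 27x³ - 8
  have key1 : (D : ℤ) ∣ 9 * 2 ^ n + 1 := by
    refine ⟨9 * x ^ 2 + 6 * x + 4, ?_⟩
    rw [hD]
    linear_combination -9 * hx
  -- hence D divides (6·2^m)² + 2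
  have hpow : (2 : ℤ) ^ n = 2 * (2 ^ m) ^ 2 := by
    rw [hm, pow_succ, pow_mul']; ring
  have key2 : (D : ℤ) ∣ (6 * 2 ^ m) ^ 2 + 2 := by
    have heq : (6 * 2 ^ m : ℤ) ^ 2 + 2 = 2 * (9 * 2 ^ n + 1) := by
      rw [hpow]; ring
    rw [heq]
    exact key1.mul_left 2
  -- so -2 is a square mod D, giving Jacobi symbol 1
  have hme : (-2 : ℤ) % (D : ℤ) = ((6 * 2 ^ m : ℤ) ^ 2) % (D : ℤ) := by
    have : (-2 : ℤ) ≡ (6 * 2 ^ m) ^ 2 [ZMOD (D : ℤ)] :=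
      Int.modEq_iff_dvd.mpr (by simpa using key2)
    exact this
  have hcop2 : IsCoprime (2 : ℤ) (D : ℤ) := ⟨-12 * (K : ℤ) - 3, 1, by push_cast [hDdef]; ring⟩
  have hcop3 : IsCoprime (3 : ℤ) (D : ℤ) := ⟨-8 * (K : ℤ) - 2, 1, by push_cast [hDdef]; ring⟩
  have hcop : IsCoprime ((6 * 2 ^ m : ℤ)) (D : ℤ) := by
    have h6 : IsCoprime (6 : ℤ) (D : ℤ) := by
      have := hcop2.mul_left hcop3
      norm_num at this
      exact this
    exact h6.mul_left (hcop2.pow_left)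
  have hgcd : ((6 * 2 ^ m : ℤ)).gcd (D : ℤ) = 1 := Int.isCoprime_iff_gcd_eq_one.mp hcop
  have j1 : jacobiSym (-2) D = 1 := by
    rw [jacobiSym.mod_left' hme]
    exact jacobiSym.sq_one' hgcd
  -- but D ≡ 7 (mod 8), so the Jacobi symbol is -1
  have hDodd : Odd D := ⟨12 * K + 3, by omega⟩
  have j2 : jacobiSym (-2) D = -1 := by
    rw [jacobiSym.at_neg_two hDodd, ZMod.χ₈'_nat_eq_if_mod_eight]
    have h78 : D % 8 = 7 := by omega
    have h2 : D % 2 = 1 := by omega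
    rw [h78, h2]
    norm_num
  rw [j1] at j2
  exact absurd j2 (by norm_num)
end

section
/- The only perfect power among the Jacobsthal-Lucas numbers j_n = 2^n + (-1)^n is j_1 = 1; that is, if x^m = 2^n + (-1)^n with integers x ≥ 0, m ≥ 2, n ≥ 0, then x^m = 1 or (n, x^m) gives a trivial value, assuming Catalan's conjecture (Mihailescu's theorem) that the only solution of a^p - b^q = 1 in integers a, b, p, q > 1 is 3^2 - 2^3 = 1. -/
theorem jacobsthal_lucas_perfect_powers
    (mihailescu : ∀ (a b : ℤ) (p q : ℕ), 1 < a → 1 < b → 1 < p → 1 < q →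
      a ^ p - b ^ q = 1 → a = 3 ∧ b = 2 ∧ p = 2 ∧ q = 3)
    (x : ℤ) (m n : ℕ) (hx : 0 ≤ x) (hm : 2 ≤ m)
    (h : x ^ m = 2 ^ n + (-1) ^ n) : x ^ m = 1 := by
  have hm1 : 1 < m := by omega
  rcases Nat.lt_or_ge n 2 with hn | hn
  · interval_cases n
    · exfalso
      norm_num at h
      rcases le_or_gt x 1 with h1 | h1
      · have := pow_le_one₀ hx h1 (n := m)
        omega
      · have h4 : (2:ℤ)^m ≤ x^m := pow_le_pow_left₀ (by norm_num) (by omega) m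
        have h5 : (2:ℤ)^2 ≤ 2^m := pow_le_pow_right₀ (by norm_num) hm
        norm_num at h5
        linarith
    · simpa using h
  · have hn1 : 1 < n := hn
    rcases Nat.even_or_odd n with he | ho
    · rw [he.neg_one_pow] at h
      have h2 : (2:ℤ)^2 ≤ 2^n := pow_le_pow_right₀ (by norm_num) hn
      norm_num at h2
      have hx1 : 1 < x := by
        rcases le_or_gt x 1 with h1 | h1
        · have := pow_le_one₀ hx h1 (n := m)
          linarith
        · exact h1
      obtain ⟨_, _, _, hn3⟩ := mihailescu x 2 m n hx1 (by norm_num) hm1 hn1 (by linarith)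
      exfalso
      obtain ⟨k, hk⟩ := he
      omega
    · rw [ho.neg_one_pow] at h
      have hn3 : 3 ≤ n := by
        obtain ⟨k, hk⟩ := ho
        omega
      have h2 : (2:ℤ)^3 ≤ 2^n := pow_le_pow_right₀ (by norm_num) hn3
      norm_num at h2
      have hx1 : 1 < x := by
        rcases le_or_gt x 1 with h1 | h1
        · have := pow_le_one₀ hx h1 (n := m)
          linarith
        · exact h1
      obtain ⟨h23, _⟩ := mihailescu 2 x n m (by norm_num) hx1 hn1 hm1 (by linarith)
      norm_num at h23
end

section
/- Assuming Mihailescu's theorem (the only solution of a^p - b^q = 1 with a, b, p, q > 1 is 3^2 - 2^3 = 1), the equation 3*x^m = 2^n - 1 has no integer solutions with m ≥ 2 and even n ≥ 4. -/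
theorem even_case_no_solutions
    (mihailescu : ∀ (a b : ℤ) (p q : ℕ), 1 < a → 1 < b → 1 < p → 1 < q →
      a ^ p - b ^ q = 1 → a = 3 ∧ b = 2 ∧ p = 2 ∧ q = 3)
    (x : ℤ) (m n : ℕ) (hm : 2 ≤ m) (hn : 4 ≤ n) (hne : Even n) :
    3 * x ^ m ≠ 2 ^ n - 1 := by
  intro heq
  obtain ⟨k, hk⟩ := hne
  have hk2 : 2 ≤ k := by omega
  have hnk : n = 2 * k := by omega
  -- pass to natural numbers
  have hxpos : 0 ≤ x ^ m := by nlinarith [pow_pos (show (0:ℤ) < 2 by norm_num) n]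
  set y := x.natAbs with hy
  have hyx : (y : ℤ) ^ m = x ^ m := by
    have h1 : ((y : ℤ)) = |x| := (Int.abs_eq_natAbs x).symm
    rw [h1, ← abs_pow, abs_of_nonneg hxpos]
  have hN : 3 * y ^ m + 1 = 2 ^ n := by
    have : (3 : ℤ) * (y:ℤ) ^ m + 1 = 2 ^ n := by rw [hyx]; linarith
    exact_mod_cast this
  -- write 2^k = A + 2
  have ha4 : 4 ≤ 2 ^ k := by
    calc 4 = 2 ^ 2 := by norm_num
    _ ≤ 2 ^ k := Nat.pow_le_pow_right (by norm_num) hk2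
  obtain ⟨A, hA⟩ : ∃ A, (2:ℕ) ^ k = A + 2 := ⟨2 ^ k - 2, by omega⟩
  have hA2 : 2 ≤ A := by omega
  have hAeven : 2 ∣ A := by
    have h2 : 2 ∣ 2 ^ k := dvd_pow_self 2 (by omega : k ≠ 0)
    omega
  have hfac : 3 * y ^ m = (A + 1) * (A + 3) := by
    have h2n : (2:ℕ) ^ n = (A + 2) * (A + 2) := by
      rw [hnk, two_mul, pow_add, hA]
    rw [h2n] at hN
    nlinarith
  have hcop : Nat.Coprime (A + 1) (A + 3) := by
    have h1 : Nat.gcd (A+1) (A+3) ∣ 2 := by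
      have := Nat.dvd_sub (Nat.gcd_dvd_right (A+1) (A+3)) (Nat.gcd_dvd_left (A+1) (A+3))
      simpa using this
    rcases (Nat.dvd_prime Nat.prime_two).mp h1 with h | h
    · exact h
    · exfalso
      have h2 : Nat.gcd (A+1) (A+3) ∣ A + 1 := Nat.gcd_dvd_left _ _
      rw [h] at h2
      omega
  have h3 : (3 : ℕ).Prime := by norm_num
  have h3dvd : 3 ∣ (A + 1) * (A + 3) := ⟨y ^ m, hfac.symm⟩
  rcases (Nat.Prime.dvd_mul h3).mp h3dvd with hA1 | hB1
  · -- 3 ∣ A + 1 ; then A + 3 = d ^ m, d^m - 2^k = 1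
    obtain ⟨c, hc⟩ := hA1
    have hym : (A + 3) * c = y ^ m := by
      have : 3 * y ^ m = 3 * ((A+3) * c) := by rw [hfac, hc]; ring
      omega
    have hcop' : Nat.Coprime (A + 3) c := Nat.Coprime.coprime_dvd_right ⟨3, by omega⟩ hcop.symm
    obtain ⟨d, hd⟩ := exists_eq_pow_of_mul_eq_pow
      (isUnit_of_dvd_one (show Nat.gcd _ _ ∣ 1 by simp [hcop'.gcd_eq_one])) hym
    have hd2 : 2 ≤ d := by
      by_contra h
      push_neg at h
      have h1 : d ^ m ≤ 1 ^ m := Nat.pow_le_pow_left (by omega) m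
      simp at h1
      omega
    have hmih : (d : ℤ) ^ m - 2 ^ k = 1 := by
      have h2 : ((d:ℤ)) ^ m = (A:ℤ) + 3 := by exact_mod_cast congrArg (Nat.cast (R := ℤ)) hd.symm
      have h3' : ((2:ℤ)) ^ k = (A:ℤ) + 2 := by exact_mod_cast congrArg (Nat.cast (R := ℤ)) hA
      rw [h2, h3']; ring
    obtain ⟨hd3, -, hm2, hk3⟩ := mihailescu d 2 m k (by exact_mod_cast hd2) (by norm_num)
      (by omega) (by omega) hmih
    -- then 2^k = 8, A = 6, but 3 ∣ A + 1
    have h8 : (2:ℕ) ^ k = 8 := by rw [hk3]; norm_num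
    omega
  · -- 3 ∣ A + 3 ; then A + 1 = d ^ m, 2^k - d^m = 1
    obtain ⟨c, hc⟩ := hB1
    have hym : (A + 1) * c = y ^ m := by
      have : 3 * y ^ m = 3 * ((A+1) * c) := by rw [hfac, hc]; ring
      omega
    have hcop' : Nat.Coprime (A + 1) c := Nat.Coprime.coprime_dvd_right ⟨3, by omega⟩ hcop
    obtain ⟨d, hd⟩ := exists_eq_pow_of_mul_eq_pow
      (isUnit_of_dvd_one (show Nat.gcd _ _ ∣ 1 by simp [hcop'.gcd_eq_one])) hym
    have hd2 : 2 ≤ d := by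
      by_contra h
      push_neg at h
      have h1 : d ^ m ≤ 1 ^ m := Nat.pow_le_pow_left (by omega) m
      simp at h1
      omega
    have hmih : (2 : ℤ) ^ k - d ^ m = 1 := by
      have h2 : ((d:ℤ)) ^ m = (A:ℤ) + 1 := by exact_mod_cast congrArg (Nat.cast (R := ℤ)) hd.symm
      have h3' : ((2:ℤ)) ^ k = (A:ℤ) + 2 := by exact_mod_cast congrArg (Nat.cast (R := ℤ)) hA
      rw [h2, h3']; ring
    obtain ⟨h23, -⟩ := mihailescu 2 d k m (by norm_num) (by exact_mod_cast hd2)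
      (by omega) (by omega) hmih
    norm_num at h23
end
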